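/- For every classical solution u of the 1-D homogeneous wave equation on (-1,1) with homogeneous Dirichlet boundary conditions and every T > 0, the boundary trace satisfies the direct (hidden regularity) inequality ∫_0^T |u_x(1,t)|² dt ≤ (T+4)·E(u(0)). -/

import Mathlib

/-!
Write `v = u_t`, `w = u_x`: the wave equation becomes the first-order system `v_t = w_x`,
`w_t = v_x` (the second equation is the symmetry of the mixed partials of the `C²` function `u`),
and the Dirichlet condition gives `v = 0` at both ends. With `e = (v² + w²) / 2`,
`∂ₜ e = ∂ₓ (v w)`, so the energy is conserved, and the multiplier `x + 1` gives
`∂ₜ ((x + 1) v w) = ∂ₓ ((x + 1) e) - e`. Integrating the latter over `[-1, 1] × [0, T]` yields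
`∫₀ᵀ u_x(1, t)² dt = T E + [∫ (x + 1) v w dx]₀ᵀ`, and `|(x + 1) v w| ≤ 2 e` bounds the bracket
by `4 E`.
-/

open MeasureTheory Set Function

section Slices

variable {E : Type*} [NormedAddCommGroup E] [NormedSpace ℝ E] {s : Set ℝ} {G : ℝ × ℝ → E}

theorem DifferentiableOn.hasDerivAt_along_snd (hG : DifferentiableOn ℝ G (s ×ˢ univ))
    {x : ℝ} (hx : x ∈ s) (t : ℝ) :
    HasDerivAt (fun τ => G (x, τ)) (fderivWithin ℝ G (s ×ˢ univ) (x, t) (0, 1)) t := by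
  have hline : HasDerivAt (fun τ : ℝ => (x, τ)) ((0 : ℝ), (1 : ℝ)) t :=
    (hasDerivAt_const t x).prodMk (hasDerivAt_id t)
  simpa only [hasDerivWithinAt_univ, Function.comp_def] using
    (hG (x, t) ⟨hx, mem_univ t⟩).hasFDerivWithinAt.comp_hasDerivWithinAt t
      (hline.hasDerivWithinAt (s := univ)) fun τ _ => ⟨hx, mem_univ τ⟩

theorem DifferentiableOn.hasDerivWithinAt_along_fst (hG : DifferentiableOn ℝ G (s ×ˢ univ))
    {x : ℝ} (hx : x ∈ s) (t : ℝ) :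
    HasDerivWithinAt (fun ξ => G (ξ, t)) (fderivWithin ℝ G (s ×ˢ univ) (x, t) (1, 0)) s x := by
  have hline : HasDerivAt (fun ξ : ℝ => (ξ, t)) ((1 : ℝ), (0 : ℝ)) x :=
    (hasDerivAt_id x).prodMk (hasDerivAt_const x t)
  exact (hG (x, t) ⟨hx, mem_univ t⟩).hasFDerivWithinAt.comp_hasDerivWithinAt x
    (hline.hasDerivWithinAt (s := s)) fun ξ hξ => show (ξ, t) ∈ s ×ˢ univ from ⟨hξ, mem_univ t⟩

theorem DifferentiableOn.eqOn_fderivWithin_along_snd (hG : DifferentiableOn ℝ G (s ×ˢ univ))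
    {g : ℝ → ℝ → E} (hg : ∀ x ∈ s, ∀ t, HasDerivAt (fun τ => G (x, τ)) (g x t) t) :
    EqOn (uncurry g) (fun q => fderivWithin ℝ G (s ×ˢ univ) q (0, 1)) (s ×ˢ univ) :=
  fun p hp => (hg p.1 hp.1 p.2).unique (hG.hasDerivAt_along_snd hp.1 p.2)

theorem DifferentiableOn.eqOn_fderivWithin_along_fst (hG : DifferentiableOn ℝ G (s ×ˢ univ))
    (hs : UniqueDiffOn ℝ s) {g : ℝ → ℝ → E}
    (hg : ∀ t, ∀ x ∈ s, HasDerivWithinAt (fun ξ => G (ξ, t)) (g x t) s x) :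
    EqOn (uncurry g) (fun q => fderivWithin ℝ G (s ×ˢ univ) q (1, 0)) (s ×ˢ univ) :=
  fun p hp => (hs p.1 hp.1).eq_deriv _ (hg p.2 p.1 hp.1) (hG.hasDerivWithinAt_along_fst hp.1 p.2)

end Slices

theorem ContDiffOn.fderivWithin_fderivWithin_apply_comm {E F : Type*} [NormedAddCommGroup E]
    [NormedSpace ℝ E] [NormedAddCommGroup F] [NormedSpace ℝ F] {f : E → F} {S : Set E}
    (hf : ContDiffOn ℝ 2 f S) (hS : UniqueDiffOn ℝ S) {p : E} (hp : p ∈ interior S) (v w : E) :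
    fderivWithin ℝ (fun q => fderivWithin ℝ f S q v) S p w
      = fderivWithin ℝ (fun q => fderivWithin ℝ f S q w) S p v := by
  have hpS : p ∈ S := interior_subset hp
  have hDf : DifferentiableWithinAt ℝ (fderivWithin ℝ f S) S p :=
    (hf.fderivWithin hS (m := 1) (by norm_num)).differentiableOn one_ne_zero p hpS
  have hsymm := (hf.contDiffWithinAt hpS).isSymmSndFDerivWithinAt (by simp) hS
    (subset_closure hp) hpS
  rw [fderivWithin_clm_apply (hS p hpS) hDf (differentiableWithinAt_const v),
    fderivWithin_clm_apply (hS p hpS) hDf (differentiableWithinAt_const w)]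
  simpa using hsymm w v

theorem intervalIntegral_integral_swap_of_continuousOn {f : ℝ → ℝ → ℝ} {a b c d : ℝ}
    (hab : a ≤ b) (hcd : c ≤ d) (hf : ContinuousOn (uncurry f) (Icc a b ×ˢ Icc c d)) :
    ∫ x in a..b, ∫ t in c..d, f x t = ∫ t in c..d, ∫ x in a..b, f x t := by
  have hint : Integrable (uncurry f)
      ((volume.restrict (Ioc a b)).prod (volume.restrict (Ioc c d))) := by
    rw [Measure.prod_restrict]
    exact (hf.integrableOn_compact (isCompact_Icc.prod isCompact_Icc)).mono_set
      (prod_mono Ioc_subset_Icc_self Ioc_subset_Icc_self)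
  simp only [intervalIntegral.integral_of_le hab, intervalIntegral.integral_of_le hcd]
  exact integral_integral_swap hint

theorem intervalIntegral_sub_eq_integral_integral_of_hasDerivAt {F F' : ℝ → ℝ → ℝ}
    {a b c d : ℝ} (hab : a ≤ b) (hcd : c ≤ d)
    (hF' : ContinuousOn (uncurry F') (Icc a b ×ˢ Icc c d))
    (hF : ∀ x ∈ Icc a b, ∀ t ∈ Icc c d, HasDerivAt (F x ·) (F' x t) t) :
    ∫ x in a..b, (F x d - F x c) = ∫ t in c..d, ∫ x in a..b, F' x t := by
  rw [← intervalIntegral_integral_swap_of_continuousOn hab hcd hF']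
  refine intervalIntegral.integral_congr fun x hx => ?_
  rw [uIcc_of_le hab] at hx
  refine (intervalIntegral.integral_eq_sub_of_hasDerivAt (fun t ht => hF x hx t ?_) ?_).symm
  · rwa [uIcc_of_le hcd] at ht
  · exact ((hF'.uncurry_left x hx).intervalIntegrable_of_Icc hcd)

structure IsWaveSystemSolution (a b : ℝ) (v w vt wt : ℝ → ℝ → ℝ) : Prop where
  continuousOn_v : ContinuousOn (uncurry v) (Icc a b ×ˢ univ)
  continuousOn_w : ContinuousOn (uncurry w) (Icc a b ×ˢ univ)
  continuousOn_vt : ContinuousOn (uncurry vt) (Icc a b ×ˢ univ)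
  continuousOn_wt : ContinuousOn (uncurry wt) (Icc a b ×ˢ univ)
  hasDerivAt_v_time : ∀ x ∈ Icc a b, ∀ t, HasDerivAt (v x ·) (vt x t) t
  hasDerivAt_w_time : ∀ x ∈ Icc a b, ∀ t, HasDerivAt (w x ·) (wt x t) t
  hasDerivAt_v_space : ∀ x ∈ Ioo a b, ∀ t, HasDerivAt (v · t) (wt x t) x
  hasDerivAt_w_space : ∀ x ∈ Ioo a b, ∀ t, HasDerivAt (w · t) (vt x t) x
  left_eq_zero : ∀ t, v a t = 0
  right_eq_zero : ∀ t, v b t = 0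

noncomputable def waveEnergy (a b : ℝ) (v w : ℝ → ℝ → ℝ) (t : ℝ) : ℝ :=
  ∫ x in a..b, (v x t ^ 2 + w x t ^ 2) / 2

namespace IsWaveSystemSolution

variable {a b : ℝ} {v w vt wt : ℝ → ℝ → ℝ} (h : IsWaveSystemSolution a b v w vt wt)
include h

theorem continuousOn_slice (t : ℝ) :
    ContinuousOn (v · t) (Icc a b) ∧ ContinuousOn (w · t) (Icc a b) ∧
      ContinuousOn (vt · t) (Icc a b) ∧ ContinuousOn (wt · t) (Icc a b) :=
  ⟨h.continuousOn_v.uncurry_right t (mem_univ t), h.continuousOn_w.uncurry_right t (mem_univ t),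
    h.continuousOn_vt.uncurry_right t (mem_univ t), h.continuousOn_wt.uncurry_right t (mem_univ t)⟩

theorem intervalIntegrable_energyDensity (hab : a ≤ b) (t : ℝ) :
    IntervalIntegrable (fun x => (v x t ^ 2 + w x t ^ 2) / 2) volume a b :=
  ((((h.continuousOn_slice t).1.pow 2).add ((h.continuousOn_slice t).2.1.pow 2)).div_const 2)
    |>.intervalIntegrable_of_Icc hab

theorem waveEnergy_eq_of_le (hab : a ≤ b) {t₀ t₁ : ℝ} (ht : t₀ ≤ t₁) :
    waveEnergy a b v w t₁ = waveEnergy a b v w t₀ := by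
  have hflux : ∀ t, ∫ x in a..b, (v x t * vt x t + w x t * wt x t) = 0 := fun t => by
    obtain ⟨hv, hw, hvt, hwt⟩ := h.continuousOn_slice t
    have hderiv : ∀ x ∈ Ioo a b, HasDerivAt (fun ξ => v ξ t * w ξ t)
        (v x t * vt x t + w x t * wt x t) x := fun x hx =>
      ((h.hasDerivAt_v_space x hx t).mul (h.hasDerivAt_w_space x hx t)).congr_deriv (by ring)
    rw [intervalIntegral.integral_eq_sub_of_hasDerivAt_of_le (f := fun ξ => v ξ t * w ξ t) hab
      (hv.mul hw) hderiv
      ((hv.mul hvt).add (hw.mul hwt) |>.intervalIntegrable_of_Icc hab),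
      h.left_eq_zero, h.right_eq_zero]
    ring
  have hcont : ContinuousOn (uncurry fun x t => v x t * vt x t + w x t * wt x t)
      (Icc a b ×ˢ Icc t₀ t₁) :=
    ((h.continuousOn_v.mul h.continuousOn_vt).add (h.continuousOn_w.mul h.continuousOn_wt)).mono
      (prod_mono le_rfl (subset_univ _))
  have hderiv : ∀ x ∈ Icc a b, ∀ t ∈ Icc t₀ t₁,
      HasDerivAt (fun τ => (v x τ ^ 2 + w x τ ^ 2) / 2) (v x t * vt x t + w x t * wt x t) t :=
    fun x hx t _ => ((((h.hasDerivAt_v_time x hx t).pow 2).add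
      ((h.hasDerivAt_w_time x hx t).pow 2)).div_const 2).congr_deriv (by ring)
  have key := intervalIntegral_sub_eq_integral_integral_of_hasDerivAt hab ht hcont hderiv
  simp only [hflux, intervalIntegral.integral_zero] at key
  rw [waveEnergy, waveEnergy, ← sub_eq_zero, ← intervalIntegral.integral_sub
    (h.intervalIntegrable_energyDensity hab t₁) (h.intervalIntegrable_energyDensity hab t₀), key]

theorem integral_multiplier_deriv (hab : a ≤ b) (t : ℝ) :
    ∫ x in a..b, (x - a) * (vt x t * w x t + v x t * wt x t)
      = (b - a) / 2 * w b t ^ 2 - waveEnergy a b v w t := by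
  obtain ⟨hv, hw, hvt, hwt⟩ := h.continuousOn_slice t
  have hderiv : ∀ x ∈ Ioo a b, HasDerivAt (fun ξ => (ξ - a) * ((v ξ t ^ 2 + w ξ t ^ 2) / 2))
      ((x - a) * (vt x t * w x t + v x t * wt x t) + (v x t ^ 2 + w x t ^ 2) / 2) x :=
    fun x hx => by
      have he := (((h.hasDerivAt_v_space x hx t).pow 2).add
        ((h.hasDerivAt_w_space x hx t).pow 2)).div_const 2
      exact (((hasDerivAt_id x).sub_const a).mul he).congr_deriv (by simp; ring)
  have hcont : ContinuousOn (fun x => (x - a) * (vt x t * w x t + v x t * wt x t)) (Icc a b) :=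
    (continuousOn_id.sub continuousOn_const).mul ((hvt.mul hw).add (hv.mul hwt))
  have hftc := intervalIntegral.integral_eq_sub_of_hasDerivAt_of_le
    (f := fun ξ => (ξ - a) * ((v ξ t ^ 2 + w ξ t ^ 2) / 2)) hab
    ((continuousOn_id.sub continuousOn_const).mul (((hv.pow 2).add (hw.pow 2)).div_const 2))
    hderiv ((hcont.intervalIntegrable_of_Icc hab).add (h.intervalIntegrable_energyDensity hab t))
  rw [intervalIntegral.integral_add (hcont.intervalIntegrable_of_Icc hab)
    (h.intervalIntegrable_energyDensity hab t), h.left_eq_zero, h.right_eq_zero] at hftc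
  rw [waveEnergy]
  linear_combination hftc

theorem multiplier_identity (hab : a ≤ b) {T : ℝ} (hT : 0 ≤ T) :
    (∫ x in a..b, (x - a) * (v x T * w x T)) - ∫ x in a..b, (x - a) * (v x 0 * w x 0) =
      (b - a) / 2 * (∫ t in 0..T, w b t ^ 2) - T * waveEnergy a b v w 0 := by
  have hcont : ContinuousOn
      (uncurry fun x t => (x - a) * (vt x t * w x t + v x t * wt x t)) (Icc a b ×ˢ Icc 0 T) :=
    (((continuous_fst.sub continuous_const).continuousOn).mul
      ((h.continuousOn_vt.mul h.continuousOn_w).add (h.continuousOn_v.mul h.continuousOn_wt))).mono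
      (prod_mono le_rfl (subset_univ _))
  have hderiv : ∀ x ∈ Icc a b, ∀ t ∈ Icc 0 T, HasDerivAt (fun τ => (x - a) * (v x τ * w x τ))
      ((x - a) * (vt x t * w x t + v x t * wt x t)) t := fun x hx t _ =>
    ((h.hasDerivAt_v_time x hx t).mul (h.hasDerivAt_w_time x hx t)).const_mul (x - a)
  have hw : Continuous (w b ·) :=
    continuousOn_univ.mp (h.continuousOn_w.uncurry_left b (right_mem_Icc.mpr hab))
  have hslice (t : ℝ) : IntervalIntegrable (fun x => (x - a) * (v x t * w x t)) volume a b :=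
    ((continuousOn_id.sub continuousOn_const).mul
      ((h.continuousOn_slice t).1.mul (h.continuousOn_slice t).2.1)).intervalIntegrable_of_Icc hab
  rw [← intervalIntegral.integral_sub (hslice T) (hslice 0),
    intervalIntegral_sub_eq_integral_integral_of_hasDerivAt hab hT hcont hderiv]
  calc ∫ t in 0..T, ∫ x in a..b, (x - a) * (vt x t * w x t + v x t * wt x t)
      = ∫ t in 0..T, ((b - a) / 2 * w b t ^ 2 - waveEnergy a b v w 0) :=
        intervalIntegral.integral_congr fun t ht => by
          rw [h.integral_multiplier_deriv hab t,
            h.waveEnergy_eq_of_le hab (uIcc_of_le hT ▸ ht).1]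
    _ = (b - a) / 2 * (∫ t in 0..T, w b t ^ 2) - T * waveEnergy a b v w 0 := by
      rw [intervalIntegral.integral_sub
        ((by fun_prop : Continuous fun t => (b - a) / 2 * w b t ^ 2).intervalIntegrable _ _)
        intervalIntegrable_const, intervalIntegral.integral_const_mul,
        intervalIntegral.integral_const, smul_eq_mul, sub_zero]

theorem abs_integral_multiplier_le (hab : a ≤ b) (t : ℝ) :
    |∫ x in a..b, (x - a) * (v x t * w x t)| ≤ (b - a) * waveEnergy a b v w t := by
  obtain ⟨hv, hw, -, -⟩ := h.continuousOn_slice t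
  have hpointwise : ∀ x ∈ Icc a b,
      |(x - a) * (v x t * w x t)| ≤ (b - a) * ((v x t ^ 2 + w x t ^ 2) / 2) := fun x hx => by
    rw [abs_mul, abs_of_nonneg (sub_nonneg.mpr hx.1)]
    have : |v x t * w x t| ≤ (v x t ^ 2 + w x t ^ 2) / 2 := by
      rw [abs_le]; constructor <;> nlinarith [sq_nonneg (v x t + w x t), sq_nonneg (v x t - w x t)]
    gcongr
    linarith [hx.2]
  calc |∫ x in a..b, (x - a) * (v x t * w x t)|
      ≤ ∫ x in a..b, |(x - a) * (v x t * w x t)| :=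
        intervalIntegral.abs_integral_le_integral_abs hab
    _ ≤ ∫ x in a..b, (b - a) * ((v x t ^ 2 + w x t ^ 2) / 2) :=
        intervalIntegral.integral_mono_on hab
          (((continuousOn_id.sub continuousOn_const).mul (hv.mul hw)).abs
            |>.intervalIntegrable_of_Icc hab)
          ((h.intervalIntegrable_energyDensity hab t).const_mul _) hpointwise
    _ = (b - a) * waveEnergy a b v w t := intervalIntegral.integral_const_mul _ _

theorem direct_inequality (hab : a ≤ b) {T : ℝ} (hT : 0 ≤ T) :
    (b - a) * (∫ t in 0..T, w b t ^ 2) ≤ 2 * (T + 2 * (b - a)) * waveEnergy a b v w 0 := by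
  have hid := h.multiplier_identity hab hT
  obtain ⟨-, hQT⟩ := abs_le.mp (h.abs_integral_multiplier_le hab T)
  obtain ⟨hQ0, -⟩ := abs_le.mp (h.abs_integral_multiplier_le hab 0)
  rw [h.waveEnergy_eq_of_le hab hT] at hQT
  linarith

end IsWaveSystemSolution

theorem isWaveSystemSolution_of_contDiffOn {a b : ℝ} (hab : a < b) {u ut ux utt : ℝ → ℝ → ℝ}
    (hu : ContDiffOn ℝ 2 (uncurry u) (Icc a b ×ˢ univ))
    (hut : ∀ x ∈ Icc a b, ∀ t, HasDerivAt (u x ·) (ut x t) t)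
    (hutt : ∀ x ∈ Icc a b, ∀ t, HasDerivAt (ut x ·) (utt x t) t)
    (hux : ∀ t, ∀ x ∈ Icc a b, HasDerivWithinAt (u · t) (ux x t) (Icc a b) x)
    (hwave : ∀ x ∈ Ioo a b, ∀ t, HasDerivAt (ux · t) (utt x t) x)
    (hbc : ∀ t, u a t = 0 ∧ u b t = 0) :
    IsWaveSystemSolution a b ut ux utt
      (fun x t => fderivWithin ℝ (uncurry ux) (Icc a b ×ˢ univ) (x, t) (0, 1)) := by
  set S := Icc a b ×ˢ (univ : Set ℝ)
  have hS : UniqueDiffOn ℝ S := (uniqueDiffOn_Icc hab).prod uniqueDiffOn_univ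
  have hu' : DifferentiableOn ℝ (uncurry u) S := hu.differentiableOn (by norm_num)
  have hDu : ContDiffOn ℝ 1 (fderivWithin ℝ (uncurry u) S) S := hu.fderivWithin hS (by norm_num)
  have hut_eq := hu'.eqOn_fderivWithin_along_snd hut
  have hux_eq := hu'.eqOn_fderivWithin_along_fst (uniqueDiffOn_Icc hab) hux
  have hutC : ContDiffOn ℝ 1 (uncurry ut) S := (hDu.clm_apply contDiffOn_const).congr hut_eq
  have huxC : ContDiffOn ℝ 1 (uncurry ux) S := (hDu.clm_apply contDiffOn_const).congr hux_eq
  have hutt_eq := (hutC.differentiableOn one_ne_zero).eqOn_fderivWithin_along_snd hutt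
  have hmixed : ∀ x ∈ Ioo a b, ∀ t, fderivWithin ℝ (uncurry ut) S (x, t) (1, 0)
      = fderivWithin ℝ (uncurry ux) S (x, t) (0, 1) := fun x hx t => by
    have hp : (x, t) ∈ S := ⟨Ioo_subset_Icc_self hx, mem_univ t⟩
    have hint : (x, t) ∈ interior S := by
      rw [interior_prod_eq, interior_Icc, interior_univ]; exact ⟨hx, mem_univ t⟩
    rw [fderivWithin_congr hut_eq (hut_eq hp), fderivWithin_congr hux_eq (hux_eq hp)]
    exact (hu.fderivWithin_fderivWithin_apply_comm hS hint (0, 1) (1, 0))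
  have hboundary : ∀ x, (∀ t, u x t = 0) → x ∈ Icc a b → ∀ t, ut x t = 0 := fun x hx hxI t =>
    (hut x hxI t).unique (by simpa [hx] using hasDerivAt_const t (0 : ℝ))
  exact
    { continuousOn_v := hutC.continuousOn
      continuousOn_w := huxC.continuousOn
      continuousOn_vt :=
        ((hutC.continuousOn_fderivWithin hS le_rfl).clm_apply continuousOn_const).congr hutt_eq
      continuousOn_wt := (huxC.continuousOn_fderivWithin hS le_rfl).clm_apply continuousOn_const
      hasDerivAt_v_time := hutt
      hasDerivAt_w_time := fun x hx t =>
        (huxC.differentiableOn one_ne_zero).hasDerivAt_along_snd hx t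
      hasDerivAt_v_space := fun x hx t => hmixed x hx t ▸
        ((hutC.differentiableOn one_ne_zero).hasDerivWithinAt_along_fst (Ioo_subset_Icc_self hx) t
          |>.hasDerivAt (Icc_mem_nhds hx.1 hx.2))
      hasDerivAt_w_space := hwave
      left_eq_zero := hboundary a (fun t => (hbc t).1) (left_mem_Icc.2 hab.le)
      right_eq_zero := hboundary b (fun t => (hbc t).2) (right_mem_Icc.2 hab.le) }

theorem direct_inequality_wave
    (u ut ux utt uxx : ℝ → ℝ → ℝ)
    -- u is C² on [-1,1] × ℝ
    (hu : ContDiffOn ℝ 2 (fun p : ℝ × ℝ => u p.1 p.2)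
      (Set.Icc (-1 : ℝ) 1 ×ˢ (Set.univ : Set ℝ)))
    -- ut, utt are the first and second time derivatives of u
    (hut : ∀ x ∈ Set.Icc (-1 : ℝ) 1, ∀ t : ℝ,
      HasDerivAt (fun τ => u x τ) (ut x t) t)
    (hutt : ∀ x ∈ Set.Icc (-1 : ℝ) 1, ∀ t : ℝ,
      HasDerivAt (fun τ => ut x τ) (utt x t) t)
    -- ux, uxx are the first and second space derivatives of u (one-sided at ±1)
    (hux : ∀ t : ℝ, ∀ x ∈ Set.Icc (-1 : ℝ) 1,
      HasDerivWithinAt (fun ξ => u ξ t) (ux x t) (Set.Icc (-1 : ℝ) 1) x)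
    (huxx : ∀ t : ℝ, ∀ x ∈ Set.Icc (-1 : ℝ) 1,
      HasDerivWithinAt (fun ξ => ux ξ t) (uxx x t) (Set.Icc (-1 : ℝ) 1) x)
    -- the wave equation u_tt = u_xx on (-1,1) × ℝ
    (hwave : ∀ x ∈ Set.Ioo (-1 : ℝ) 1, ∀ t : ℝ, utt x t = uxx x t)
    -- homogeneous Dirichlet boundary conditions
    (hbc : ∀ t : ℝ, u (-1) t = 0 ∧ u 1 t = 0) :
    ∀ T : ℝ, 0 < T →
      (∫ t in (0 : ℝ)..T, (ux 1 t) ^ 2)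
        ≤ (T + 4) * ((1 / 2) * ∫ x in (-1 : ℝ)..1, ((ut x 0) ^ 2 + (ux x 0) ^ 2)) := by
  intro T hT
  have hwave' : ∀ x ∈ Ioo (-1 : ℝ) 1, ∀ t, HasDerivAt (ux · t) (utt x t) x := fun x hx t =>
    hwave x hx t ▸ (huxx t x (Ioo_subset_Icc_self hx)).hasDerivAt (Icc_mem_nhds hx.1 hx.2)
  have hsys := isWaveSystemSolution_of_contDiffOn (by norm_num) hu hut hutt hux hwave' hbc
  have hE : waveEnergy (-1) 1 ut ux 0 = 1 / 2 * ∫ x in (-1 : ℝ)..1, (ut x 0 ^ 2 + ux x 0 ^ 2) := by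
    rw [waveEnergy, intervalIntegral.integral_div]; ring
  have h := hsys.direct_inequality (by norm_num) hT.le
  rw [← hE]
  linarith
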